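/- arXiv:2003.07537 — 2 statements merged into one kernel-verified Lean document; each statement's English description precedes it below -/
import Mathlib

section
/- Let Z have CDF P_Z(z) = 1 − (1 − z^{N−1})^{2^B} on [0,1] (so density p_Z(z) = (N−1) Σ_{m=1}^{2^B} C(2^B,m)(−1)^{m−1} m z^{m(N−1)−1}), and let G be independent with CDF P_G(g) = 1 − (1−g)^{N−2} on [0,1], where N ≥ 3, B ≥ 0 are integers. Then V = Z·G has CDF P_V(v) = 1 + (N−1) Σ_{n=0}^{N−2} Σ_{m=1}^{2^B} C(N−2,n) C(2^B,m) (−1)^{n+m} m (v^n − v^{m(N−1)}) / (mN − (m+n)) for v ∈ [0,1]. -/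
/-!
Conditioning on `Z`, `P(ZG ≤ v) = ∫₀¹ P_G(v/z) p_Z(z) dz` with the polynomial density
`p_Z = P_Z'`. On `(0, v]` the factor `P_G(v/z)` equals `1` and contributes `P_Z(v)`; on `(v, 1]`
it is `1 - (1 - v/z)^(N-2)`, and expanding binomially turns `p_Z(z) (1 - v/z)^(N-2)` into a
combination of monomials `v^n z^(m(N-1)-1-n)` with `n ≤ N - 2`, so with nonnegative exponents;
these integrate termwise over `[v, 1]` to the stated double sum.
-/

open MeasureTheory ProbabilityTheory Finset

theorem one_sub_pow_eq_sum {R : Type*} [CommRing R] (x : R) (n : ℕ) :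
    (1 - x) ^ n = ∑ m ∈ range (n + 1), (n.choose m : R) * (-1) ^ m * x ^ m := by
  rw [sub_eq_neg_add, add_pow]
  refine sum_congr rfl fun m _ => ?_
  rw [neg_pow, one_pow]
  ring

theorem measure_le_eq_ofReal_clamp {Ω : Type*} [MeasurableSpace Ω] {μ : Measure Ω}
    {X : Ω → ℝ} (hX : ∀ᵐ ω ∂μ, X ω ∈ Set.Icc (0 : ℝ) 1) {F : ℝ → ℝ}
    (hcdf : ∀ x ∈ Set.Icc (0 : ℝ) 1, μ {ω | X ω ≤ x} = ENNReal.ofReal (F x))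
    (hF0 : F 0 = 0) (x : ℝ) : μ {ω | X ω ≤ x} = ENNReal.ofReal (F (max 0 (min x 1))) := by
  rcases lt_or_ge x 0 with hx | hx
  · rw [max_eq_left (min_le_of_left_le hx.le), hF0, ENNReal.ofReal_zero]
    refine measure_mono_null ?_ (ae_iff.mp hX)
    intro ω (hω : X ω ≤ x) h
    exact absurd hx (not_lt.mpr (h.1.trans hω))
  · have hx' : min x 1 ∈ Set.Icc (0 : ℝ) 1 :=
      ⟨le_min hx zero_le_one, min_le_right _ _⟩
    have h : {ω | X ω ≤ x} =ᵐ[μ] {ω | X ω ≤ min x 1} := by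
      filter_upwards [hX] with ω hω
      change (X ω ≤ x) = (X ω ≤ min x 1)
      simp [hω.2]
    rw [measure_congr h, hcdf _ hx', max_eq_right hx'.1]

theorem setLIntegral_Ioc_ofReal {g : ℝ → ℝ} {a b : ℝ} (hab : a ≤ b)
    (hg : IntervalIntegrable g volume a b) (hg0 : ∀ z ∈ Set.Ioc a b, 0 ≤ g z) :
    ∫⁻ z in Set.Ioc a b, ENNReal.ofReal (g z) = ENNReal.ofReal (∫ z in a..b, g z) := by
  rw [intervalIntegral.integral_of_le hab, ofReal_integral_eq_lintegral_ofReal hg.1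
    ((ae_restrict_iff' measurableSet_Ioc).mpr (ae_of_all _ hg0))]

theorem map_eq_withDensity_of_hasDerivAt_cdf {Ω : Type*} [MeasurableSpace Ω]
    {μ : Measure Ω} [IsProbabilityMeasure μ] {X : Ω → ℝ} (hXm : Measurable X)
    (hX : ∀ᵐ ω ∂μ, X ω ∈ Set.Icc (0 : ℝ) 1) {F f : ℝ → ℝ} (hF : ∀ x, HasDerivAt F (f x) x)
    (hf : Continuous f) (hf0 : ∀ x ∈ Set.Icc (0 : ℝ) 1, 0 ≤ f x) (hF0 : F 0 = 0)
    (hcdf : ∀ x ∈ Set.Icc (0 : ℝ) 1, μ {ω | X ω ≤ x} = ENNReal.ofReal (F x)) :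
    μ.map X = (volume.restrict (Set.Ioc 0 1)).withDensity fun x => ENNReal.ofReal (f x) := by
  refine Measure.ext_of_Iic _ _ fun x => ?_
  rw [Measure.map_apply hXm measurableSet_Iic, withDensity_apply _ measurableSet_Iic,
    Measure.restrict_restrict measurableSet_Iic, Set.inter_comm, Set.Ioc_inter_Iic, inf_comm]
  change μ {ω | X ω ≤ x} = _
  rw [measure_le_eq_ofReal_clamp hX hcdf hF0]
  rcases lt_or_ge (min x 1) 0 with hx | hx
  · rw [Set.Ioc_eq_empty (lt_asymm hx), Measure.restrict_empty, lintegral_zero_measure,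
      max_eq_left hx.le, hF0, ENNReal.ofReal_zero]
  · rw [max_eq_right hx, setLIntegral_Ioc_ofReal hx (hf.intervalIntegrable _ _)
      fun z hz => hf0 z ⟨hz.1.le, hz.2.trans (min_le_right _ _)⟩,
      intervalIntegral.integral_eq_sub_of_hasDerivAt (fun z _ => hF z)
        (hf.intervalIntegrable _ _), hF0, sub_zero]

theorem ProbabilityTheory.IndepFun.measure_preimage_eq_lintegral {Ω α β : Type*}
    [MeasurableSpace Ω] [MeasurableSpace α] [MeasurableSpace β] {μ : Measure Ω}
    [IsFiniteMeasure μ] {X : Ω → α} {Y : Ω → β} (hX : Measurable X) (hY : Measurable Y)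
    (hXY : IndepFun X Y μ) {s : Set (α × β)} (hs : MeasurableSet s) :
    μ ((fun ω => (X ω, Y ω)) ⁻¹' s) = ∫⁻ x, μ.map Y (Prod.mk x ⁻¹' s) ∂μ.map X := by
  rw [← Measure.map_apply (hX.prodMk hY) hs,
    hXY.map_prod_eq_prod_map_map hX.aemeasurable hY.aemeasurable, Measure.prod_apply hs]

noncomputable def cdfZ (N K : ℕ) (z : ℝ) : ℝ := 1 - (1 - z ^ (N - 1)) ^ K

noncomputable def pdfZ (N K : ℕ) (z : ℝ) : ℝ :=
  -(((N : ℝ) - 1) * ∑ m ∈ Icc 1 K, (K.choose m : ℝ) * (-1) ^ m * m * z ^ (m * (N - 1) - 1))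

noncomputable def cdfG (N : ℕ) (g : ℝ) : ℝ := 1 - (1 - max 0 (min g 1)) ^ (N - 2)

noncomputable def tailDensity (N K : ℕ) (v z : ℝ) : ℝ :=
  -(((N : ℝ) - 1) * ∑ n ∈ range (N - 1), ∑ m ∈ Icc 1 K,
    ((N - 2).choose n : ℝ) * (K.choose m : ℝ) * (-1) ^ (n + m) * m
      * (v ^ n * z ^ (m * (N - 1) - 1 - n)))

section

variable {N K : ℕ}

theorem hasDerivAt_cdfZ (hN : 1 ≤ N) (z : ℝ) : HasDerivAt (cdfZ N K) (pdfZ N K z) z := by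
  have hcdf : cdfZ N K =
      fun z => 1 - ∑ m ∈ range (K + 1), (K.choose m : ℝ) * (-1) ^ m * z ^ (m * (N - 1)) := by
    funext z
    simp only [cdfZ, one_sub_pow_eq_sum, pow_mul']
  rw [hcdf]
  refine ((HasDerivAt.fun_sum fun m _ => (hasDerivAt_pow (m * (N - 1)) z).const_mul
    ((K.choose m : ℝ) * (-1) ^ m)).const_sub 1).congr_deriv ?_
  have hsub : Icc 1 K ⊆ range (K + 1) := fun m hm => by
    simp only [mem_Icc, mem_range] at hm ⊢; omega
  have hzero : ∀ m ∈ range (K + 1), m ∉ Icc 1 K →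
      ((N : ℝ) - 1) * ((K.choose m : ℝ) * (-1) ^ m * m * z ^ (m * (N - 1) - 1)) = 0 := by
    intro m hm hm'
    obtain rfl : m = 0 := by simp only [mem_Icc, mem_range] at hm hm'; omega
    simp
  rw [pdfZ, mul_sum, sum_subset hsub hzero, neg_inj]
  refine sum_congr rfl fun m _ => ?_
  push_cast [Nat.cast_sub hN]
  ring

theorem pdfZ_nonneg (hN : 1 ≤ N) {z : ℝ} (hz : z ∈ Set.Icc (0 : ℝ) 1) : 0 ≤ pdfZ N K z := by
  have h : HasDerivAt (cdfZ N K)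
      (K * ((N : ℝ) - 1) * z ^ (N - 2) * (1 - z ^ (N - 1)) ^ (K - 1)) z := by
    refine ((((hasDerivAt_pow (N - 1) z).const_sub 1).pow K).const_sub 1).congr_deriv ?_
    rw [Nat.cast_sub hN, show N - 1 - 1 = N - 2 by omega]
    push_cast
    ring
  have hN' : (0 : ℝ) ≤ N - 1 := sub_nonneg.2 (Nat.one_le_cast.2 hN)
  rw [(hasDerivAt_cdfZ hN z).unique h]
  exact mul_nonneg (mul_nonneg (mul_nonneg K.cast_nonneg hN') (pow_nonneg hz.1 _))
    (pow_nonneg (sub_nonneg.2 (pow_le_one₀ hz.1 hz.2)) _)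

theorem continuous_pdfZ : Continuous (pdfZ N K) := by
  unfold pdfZ; fun_prop

theorem cdfZ_zero (hN : 2 ≤ N) : cdfZ N K 0 = 0 := by
  simp [cdfZ, zero_pow (by omega : N - 1 ≠ 0)]

theorem cdfZ_one (hK : K ≠ 0) : cdfZ N K 1 = 1 := by
  simp [cdfZ, hK]

theorem cdfG_nonneg (g : ℝ) : 0 ≤ cdfG N g := by
  have h0 : 0 ≤ max 0 (min g 1) := le_max_left _ _
  have h1 : max 0 (min g 1) ≤ 1 := max_le zero_le_one (min_le_right _ _)
  exact sub_nonneg.2 (pow_le_one₀ (sub_nonneg.2 h1) (by linarith))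

theorem cdfG_of_one_le (hN : 3 ≤ N) {g : ℝ} (hg : 1 ≤ g) : cdfG N g = 1 := by
  simp [cdfG, min_eq_right hg, zero_pow (by omega : N - 2 ≠ 0)]

theorem cdfG_of_mem {g : ℝ} (hg : g ∈ Set.Icc (0 : ℝ) 1) :
    cdfG N g = 1 - (1 - g) ^ (N - 2) := by
  rw [cdfG, min_eq_left hg.2, max_eq_right hg.1]

theorem pdfZ_mul_one_sub_div_pow (hN : 2 ≤ N) (v : ℝ) {z : ℝ} (hz : z ≠ 0) :
    pdfZ N K z * (1 - v / z) ^ (N - 2) = tailDensity N K v z := by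
  rw [pdfZ, tailDensity, one_sub_pow_eq_sum, show N - 2 + 1 = N - 1 by omega, neg_mul,
    mul_assoc, sum_mul_sum, sum_comm]
  congr 2
  refine sum_congr rfl fun n hn => sum_congr rfl fun m hm => ?_
  simp only [mem_range, mem_Icc] at hn hm
  have hpow : z ^ (m * (N - 1) - 1) = z ^ (m * (N - 1) - 1 - n) * z ^ n := by
    have : N - 1 ≤ m * (N - 1) := Nat.le_mul_of_pos_left _ hm.1
    rw [← pow_add]; congr 1; omega
  rw [div_pow, hpow]
  field_simp
  ring

theorem integral_pow_mul_pow_sub_one_sub (v : ℝ) {n k : ℕ} (h : n < k) :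
    ∫ z in v..1, v ^ n * z ^ (k - 1 - n) = (v ^ n - v ^ k) / ((k : ℝ) - n) := by
  have hk : ((k - 1 - n : ℕ) : ℝ) + 1 = k - n := by
    rw [← Nat.cast_add_one, show k - 1 - n + 1 = k - n by omega, Nat.cast_sub h.le]
  rw [intervalIntegral.integral_const_mul, integral_pow, one_pow, hk,
    show k - 1 - n + 1 = k - n by omega, mul_div_assoc', mul_sub, mul_one, ← pow_add,
    Nat.add_sub_cancel' h.le]

theorem integral_tailDensity (hN : 2 ≤ N) (v : ℝ) :
    ∫ z in v..1, tailDensity N K v z =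
      -(((N : ℝ) - 1) * ∑ n ∈ range (N - 1), ∑ m ∈ Icc 1 K,
        ((N - 2).choose n : ℝ) * (K.choose m : ℝ) * (-1) ^ (n + m) * m
          * (v ^ n - v ^ (m * (N - 1))) / ((m : ℝ) * N - (m + n))) := by
  unfold tailDensity
  rw [intervalIntegral.integral_neg, intervalIntegral.integral_const_mul,
    intervalIntegral.integral_finsetSum
      fun n _ => (by fun_prop : Continuous _).intervalIntegrable _ _]
  congr 2
  refine sum_congr rfl fun n hn => ?_
  rw [intervalIntegral.integral_finsetSum
    fun m _ => (by fun_prop : Continuous _).intervalIntegrable _ _]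
  refine sum_congr rfl fun m hm => ?_
  simp only [mem_range, mem_Icc] at hn hm
  have hnk : n < m * (N - 1) := by
    have : N - 1 ≤ m * (N - 1) := Nat.le_mul_of_pos_left _ hm.1
    omega
  rw [intervalIntegral.integral_const_mul, integral_pow_mul_pow_sub_one_sub v hnk,
    mul_div_assoc]
  push_cast [Nat.cast_sub (by omega : 1 ≤ N)]
  ring

theorem eqOn_pdfZ_mul_cdfG_Ioc_zero (hN : 3 ≤ N) (v : ℝ) :
    Set.EqOn (fun z => pdfZ N K z * cdfG N (v / z)) (pdfZ N K) (Set.Ioc 0 v) := fun z hz => by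
  simp only [cdfG_of_one_le hN ((one_le_div hz.1).2 hz.2), mul_one]

theorem eqOn_pdfZ_mul_cdfG_Ioc_one (hN : 2 ≤ N) {v : ℝ} (hv : 0 ≤ v) :
    Set.EqOn (fun z => pdfZ N K z * cdfG N (v / z))
      (fun z => pdfZ N K z - tailDensity N K v z) (Set.Ioc v 1) := fun z hz => by
  have hz0 : 0 < z := hv.trans_lt hz.1
  simp only [cdfG_of_mem ⟨div_nonneg hv hz0.le, ((div_lt_one hz0).2 hz.1).le⟩, mul_sub, mul_one,
    pdfZ_mul_one_sub_div_pow hN v hz0.ne']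

theorem lintegral_pdfZ_mul_cdfG (hN : 3 ≤ N) (hK : K ≠ 0) {v : ℝ} (hv0 : 0 ≤ v)
    (hv1 : v ≤ 1) :
    ∫⁻ z in Set.Ioc 0 1, ENNReal.ofReal (pdfZ N K z * cdfG N (v / z))
      = ENNReal.ofReal (1 + ((N : ℝ) - 1) * ∑ n ∈ range (N - 1), ∑ m ∈ Icc 1 K,
          ((N - 2).choose n : ℝ) * (K.choose m : ℝ) * (-1) ^ (n + m) * m
            * (v ^ n - v ^ (m * (N - 1))) / ((m : ℝ) * N - (m + n))) := by
  have h₁ := eqOn_pdfZ_mul_cdfG_Ioc_zero (K := K) hN v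
  have h₂ := eqOn_pdfZ_mul_cdfG_Ioc_one (N := N) (K := K) (by omega) hv0
  rw [← Set.uIoc_of_le hv0] at h₁
  rw [← Set.uIoc_of_le hv1] at h₂
  have i₁ := (intervalIntegrable_congr h₁).2
    (continuous_pdfZ.intervalIntegrable (μ := volume) _ _)
  have i₂ := (intervalIntegrable_congr h₂).2
    ((continuous_pdfZ.sub (by unfold tailDensity; fun_prop)).intervalIntegrable (μ := volume) _ _)
  have hcdfZ (a b : ℝ) : ∫ z in a..b, pdfZ N K z = cdfZ N K b - cdfZ N K a :=
    intervalIntegral.integral_eq_sub_of_hasDerivAt (fun z _ => hasDerivAt_cdfZ (by omega) z)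
      (continuous_pdfZ.intervalIntegrable _ _)
  rw [setLIntegral_Ioc_ofReal zero_le_one (i₁.trans i₂) fun z hz =>
      mul_nonneg (pdfZ_nonneg (by omega) ⟨hz.1.le, hz.2⟩) (cdfG_nonneg _),
    ← intervalIntegral.integral_add_adjacent_intervals i₁ i₂,
    intervalIntegral.integral_congr_ae (ae_of_all _ h₁),
    intervalIntegral.integral_congr_ae (ae_of_all _ h₂),
    intervalIntegral.integral_sub (continuous_pdfZ.intervalIntegrable _ _)
      ((by unfold tailDensity; fun_prop : Continuous _).intervalIntegrable _ _),
    hcdfZ, hcdfZ, integral_tailDensity (by omega), cdfZ_zero (by omega), cdfZ_one hK]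
  congr 1
  ring

end

/-- If `Z` has CDF `1 − (1 − z^(N−1))^(2^B)` on `[0,1]` and `G` is an independent
Beta(1, N−2) variable (CDF `1 − (1−g)^(N−2)` on `[0,1]`), then `V = Z·G` has the
closed-form CDF of Theorem 3. -/
theorem stmt5 {Ω : Type*} [MeasurableSpace Ω] (μ : Measure Ω) [IsProbabilityMeasure μ]
    (N B : ℕ) (hN : 3 ≤ N) (Z G : Ω → ℝ)
    (hZmeas : Measurable Z) (hGmeas : Measurable G)
    (hZrange : ∀ᵐ ω ∂μ, Z ω ∈ Set.Icc (0 : ℝ) 1)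
    (hGrange : ∀ᵐ ω ∂μ, G ω ∈ Set.Icc (0 : ℝ) 1)
    (hZcdf : ∀ z ∈ Set.Icc (0 : ℝ) 1,
      μ {ω | Z ω ≤ z} = ENNReal.ofReal (1 - (1 - z ^ (N - 1)) ^ (2 ^ B)))
    (hGcdf : ∀ g ∈ Set.Icc (0 : ℝ) 1,
      μ {ω | G ω ≤ g} = ENNReal.ofReal (1 - (1 - g) ^ (N - 2)))
    (hindep : IndepFun Z G μ) :
    ∀ v ∈ Set.Icc (0 : ℝ) 1,
      μ {ω | Z ω * G ω ≤ v}
        = ENNReal.ofReal (1 + ((N : ℝ) - 1) *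
            ∑ n ∈ Finset.range (N - 1), ∑ m ∈ Finset.Icc 1 (2 ^ B),
              ((N - 2).choose n : ℝ) * ((2 ^ B).choose m : ℝ) * (-1 : ℝ) ^ (n + m)
                * (m : ℝ) * (v ^ n - v ^ (m * (N - 1)))
                / ((m : ℝ) * (N : ℝ) - ((m : ℝ) + (n : ℝ)))) := by
  rintro v ⟨hv0, hv1⟩
  have hZlaw : μ.map Z = (volume.restrict (Set.Ioc 0 1)).withDensity
      fun z => ENNReal.ofReal (pdfZ N (2 ^ B) z) :=
    map_eq_withDensity_of_hasDerivAt_cdf hZmeas hZrange (hasDerivAt_cdfZ (by omega))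
      continuous_pdfZ (fun z hz => pdfZ_nonneg (by omega) hz) (cdfZ_zero (by omega)) hZcdf
  have hGlaw (g : ℝ) : μ.map G (Set.Iic g) = ENNReal.ofReal (cdfG N g) := by
    rw [Measure.map_apply hGmeas measurableSet_Iic]
    exact measure_le_eq_ofReal_clamp hGrange hGcdf (by simp) g
  have hs : MeasurableSet {p : ℝ × ℝ | p.1 * p.2 ≤ v} :=
    measurableSet_le (by fun_prop) (by fun_prop)
  calc μ {ω | Z ω * G ω ≤ v} = ∫⁻ z, μ.map G {g | z * g ≤ v} ∂μ.map Z :=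
        hindep.measure_preimage_eq_lintegral hZmeas hGmeas hs
    _ = ∫⁻ z in Set.Ioc 0 1, ENNReal.ofReal (pdfZ N (2 ^ B) z * cdfG N (v / z)) := by
      rw [hZlaw, lintegral_withDensity_eq_lintegral_mul _
        continuous_pdfZ.measurable.ennreal_ofReal ?_]
      · refine setLIntegral_congr_fun measurableSet_Ioc fun z hz => ?_
        have hset : {g | z * g ≤ v} = Set.Iic (v / z) := by ext g; simp [le_div_iff₀' hz.1]
        rw [Pi.mul_apply, hset, hGlaw,
          ENNReal.ofReal_mul (pdfZ_nonneg (by omega) ⟨hz.1.le, hz.2⟩)]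
      · exact measurable_measure_prodMk_left hs
    _ = _ := lintegral_pdfZ_mul_cdfG hN (pow_ne_zero _ two_ne_zero) hv0 hv1
end

section
/- For B ≥ 0 and N ≥ 2 integers, the random variable Z with CDF P_Z(z) = 1 − (1 − z^{N−1})^{2^B} on [0,1] has mean E[Z] = 2^B β(2^B, N/(N−1)), where β is the Euler beta function. -/
/-!
By the layer-cake formula, `E[Z] = ∫₀¹ P(Z > t) dt = ∫₀¹ (1 - t^n)^K dt` with `n = N - 1` and
`K = 2^B`. Integrating `t ↦ t (1 - t^n)^(K+1)` by parts gives the recurrence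
`(1 + (K+1) n) I_{K+1} = (K+1) n I_K`, which `Γ(K+1) Γ(1+1/n) / Γ(K+1+1/n)` also satisfies;
and `1 + 1/n = N/(N-1)`, `K β(K, a) = Γ(K+1) Γ(a) / Γ(K+a)`.
-/

open MeasureTheory

noncomputable def eulerBeta (x y : ℝ) : ℝ := Real.Gamma x * Real.Gamma y / Real.Gamma (x + y)

open intervalIntegral

section OneSubPowIntegral

variable {n : ℕ}

lemma hasDerivAt_mul_one_sub_pow_pow_succ (hn : 0 < n) (K : ℕ) (t : ℝ) :
    HasDerivAt (fun t : ℝ => t * (1 - t ^ n) ^ (K + 1))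
      ((1 + (K + 1) * n) * (1 - t ^ n) ^ (K + 1) - (K + 1) * n * (1 - t ^ n) ^ K) t := by
  have h : HasDerivAt (fun t : ℝ => t * (1 - t ^ n) ^ (K + 1))
      (1 * (1 - t ^ n) ^ (K + 1) + t * ((K + 1 : ℕ) * (1 - t ^ n) ^ K * -(n * t ^ (n - 1)))) t :=
    (hasDerivAt_id' t).mul (((hasDerivAt_pow n t).const_sub 1).pow (K + 1))
  convert h using 1
  have ht : t * t ^ (n - 1) = t ^ n := by rw [← pow_succ', Nat.sub_add_cancel hn]
  push_cast
  linear_combination (((K : ℝ) + 1) * n * (1 - t ^ n) ^ K) * ht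

lemma integral_one_sub_pow_pow_succ (hn : 0 < n) (K : ℕ) :
    (1 + (K + 1) * n) * ∫ t in (0 : ℝ)..1, (1 - t ^ n) ^ (K + 1)
      = (K + 1) * n * ∫ t in (0 : ℝ)..1, (1 - t ^ n) ^ K := by
  have hint : ∀ m : ℕ, IntervalIntegrable (fun t : ℝ => (1 - t ^ n) ^ m) volume 0 1 :=
    fun m => (by fun_prop : Continuous fun t : ℝ => (1 - t ^ n) ^ m).intervalIntegrable 0 1
  have hftc := integral_eq_sub_of_hasDerivAt
    (fun t _ => hasDerivAt_mul_one_sub_pow_pow_succ hn K t)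
    (((hint _).const_mul _).sub ((hint _).const_mul _))
  rw [integral_sub ((hint _).const_mul _) ((hint _).const_mul _),
    intervalIntegral.integral_const_mul, intervalIntegral.integral_const_mul] at hftc
  simp only [one_pow, sub_self, zero_pow (Nat.succ_ne_zero K), mul_zero, zero_mul] at hftc
  linarith

lemma integral_one_sub_pow_pow (hn : 0 < n) (K : ℕ) :
    ∫ t in (0 : ℝ)..1, (1 - t ^ n) ^ K
      = Real.Gamma (K + 1) * Real.Gamma (1 + 1 / n) / Real.Gamma (K + (1 + 1 / n)) := by
  have hnpos : (0 : ℝ) < n := by exact_mod_cast hn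
  induction K with
  | zero =>
    have := (Real.Gamma_pos_of_pos (by positivity : (0 : ℝ) < 1 + (n : ℝ)⁻¹)).ne'
    simp [this]
  | succ K ih =>
    have hK : (0 : ℝ) < K + (1 + 1 / n) := by positivity
    have hd : (0 : ℝ) < 1 + (K + 1) * n := by positivity
    apply mul_left_cancel₀ hd.ne'
    rw [integral_one_sub_pow_pow_succ hn K, ih]
    push_cast
    rw [Real.Gamma_add_one (s := (K : ℝ) + 1) (by positivity),
      show (K : ℝ) + 1 + (1 + 1 / n) = K + (1 + 1 / n) + 1 by ring, Real.Gamma_add_one hK.ne']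
    field_simp
    ring

end OneSubPowIntegral

lemma mul_eulerBeta {x : ℝ} (hx : x ≠ 0) (y : ℝ) :
    x * eulerBeta x y = Real.Gamma (x + 1) * Real.Gamma y / Real.Gamma (x + y) := by
  rw [eulerBeta, Real.Gamma_add_one hx, mul_div_assoc, mul_div_assoc, mul_assoc]

lemma integral_eq_intervalIntegral_measureReal_lt {α : Type*} [MeasurableSpace α] {μ : Measure α}
    [IsFiniteMeasure μ] {f : α → ℝ} {M : ℝ} (hf : AEMeasurable f μ) (f_nn : 0 ≤ᵐ[μ] f)
    (f_bdd : f ≤ᵐ[μ] fun _ => M) (hM : 0 ≤ M) :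
    ∫ a, f a ∂μ = ∫ t in (0 : ℝ)..M, μ.real {a | t < f a} := by
  have f_int : Integrable f μ := by
    refine Integrable.of_bound hf.aestronglyMeasurable M ?_
    filter_upwards [f_nn, f_bdd] with a h0 hM
    rwa [Real.norm_of_nonneg h0]
  have null_above : μ {a | M < f a} = 0 := by
    rw [measure_eq_zero_iff_ae_notMem]
    filter_upwards [f_bdd] with a ha using not_lt.mpr ha
  rw [f_int.integral_eq_integral_meas_lt f_nn, integral_of_le hM,
    setIntegral_eq_of_subset_of_ae_sdiff_eq_zero nullMeasurableSet_Ioi Set.Ioc_subset_Ioi_self]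
  refine Filter.Eventually.of_forall fun t ht => ?_
  have htM : M < t := by simp_all
  rw [measureReal_def, ENNReal.toReal_eq_zero_iff]
  exact Or.inl <| measure_mono_null (fun a ha => htM.trans ha) null_above

/-- If `Z` has CDF `P_Z(z) = 1 − (1 − z^(N−1))^(2^B)` on `[0,1]` (with `Z ∈ [0,1]` a.s.),
`B ≥ 0`, `N ≥ 2`, then `E[Z] = 2^B β(2^B, N/(N−1))`. -/
theorem stmt6 {Ω : Type*} [MeasurableSpace Ω] (μ : Measure Ω) [IsProbabilityMeasure μ]
    (N B : ℕ) (hN : 2 ≤ N) (Z : Ω → ℝ) (hZmeas : Measurable Z)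
    (hZrange : ∀ᵐ ω ∂μ, Z ω ∈ Set.Icc (0 : ℝ) 1)
    (hZcdf : ∀ z ∈ Set.Icc (0 : ℝ) 1,
      μ {ω | Z ω ≤ z} = ENNReal.ofReal (1 - (1 - z ^ (N - 1)) ^ (2 ^ B))) :
    ∫ ω, Z ω ∂μ = 2 ^ B * eulerBeta (2 ^ B) ((N : ℝ) / ((N : ℝ) - 1)) := by
  have hn : 0 < N - 1 := by omega
  have htail : ∀ t ∈ Set.uIcc (0 : ℝ) 1,
      μ.real {ω | t < Z ω} = (1 - t ^ (N - 1)) ^ (2 ^ B) := by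
    intro t ht
    rw [Set.uIcc_of_le zero_le_one] at ht
    have hpow : 0 ≤ t ^ (N - 1) ∧ t ^ (N - 1) ≤ 1 := ⟨pow_nonneg ht.1 _, pow_le_one₀ ht.1 ht.2⟩
    have hF : 0 ≤ 1 - (1 - t ^ (N - 1)) ^ (2 ^ B) :=
      sub_nonneg.2 (pow_le_one₀ (sub_nonneg.2 hpow.2) (by linarith [hpow.1]))
    have hcompl : {ω | t < Z ω} = {ω | Z ω ≤ t}ᶜ := by ext; simp
    rw [hcompl, probReal_compl_eq_one_sub (measurableSet_le hZmeas measurable_const),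
      measureReal_def, hZcdf t ht, ENNReal.toReal_ofReal hF, sub_sub_cancel]
  have hratio : (N : ℝ) / ((N : ℝ) - 1) = 1 + 1 / ((N - 1 : ℕ) : ℝ) := by
    have hN1 : (N : ℝ) - 1 ≠ 0 := by
      rw [sub_ne_zero]; exact_mod_cast (by omega : N ≠ 1)
    rw [Nat.cast_sub (by omega : 1 ≤ N), Nat.cast_one]
    field_simp
    ring
  rw [integral_eq_intervalIntegral_measureReal_lt hZmeas.aemeasurable
      (hZrange.mono fun _ h => h.1) (hZrange.mono fun _ h => h.2) zero_le_one,
    integral_congr htail, integral_one_sub_pow_pow hn, hratio, mul_eulerBeta (by positivity)]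
  norm_cast
end
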